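/- The lower tight bound equals C_L(θ) = 2θ/N: for all probability measures μ, ν on {0,...,N-1} with TV(μ,ν) = θ, one has 𝔽(μ,ν) ≥ 2θ/N, with equality for μ = (2θ/N)(1,0,1,0,...,0) + (1-θ)δ_0 and ν = (2θ/N)(0,1,0,1,...,1) + (1-θ)δ_0. -/

import Mathlib

open Finset

/-- Discrete Fourier transform of a real vector, at integer frequency `k`. -/
noncomputable def dft (N : ℕ) (f : Fin N → ℝ) (k : ℤ) : ℂ :=
  ∑ j : Fin N, (f j : ℂ) * Complex.exp (-2 * Real.pi * Complex.I * ((j : ℕ) : ℂ) * (k : ℂ) / (N : ℂ))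

/-- Squared Fourier Discrepancy between two vectors. -/
noncomputable def F2 (N : ℕ) (μ ν : Fin N → ℝ) : ℝ :=
  (∑ k ∈ Finset.Icc 1 (N / 2 - 1), ‖dft N μ (k : ℤ) - dft N ν (k : ℤ)‖ ^ 2 / (k : ℝ) ^ 2)
    + ‖dft N μ ((N : ℤ) / 2) - dft N ν ((N : ℤ) / 2)‖ ^ 2 / (N : ℝ) ^ 2

/-- Fourier Discrepancy. -/
noncomputable def FD (N : ℕ) (μ ν : Fin N → ℝ) : ℝ := Real.sqrt (F2 N μ ν)

/-- Total variation distance. -/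
noncomputable def TV (N : ℕ) (μ ν : Fin N → ℝ) : ℝ := (1 / 2) * ∑ i : Fin N, |μ i - ν i|

/-- A probability vector. -/
def IsProb (N : ℕ) (μ : Fin N → ℝ) : Prop := (∀ i, 0 ≤ μ i) ∧ ∑ i : Fin N, μ i = 1

/-!
Write `g = μ - ν`. Then `ĝ₀ = ∑ g = 0` and `∑ |g| = 2 TV(μ, ν)`. Parseval gives
`∑_{k<N} |ĝ_k|² = N ∑ g²`, and the symmetry `ĝ_{N-k} = conj ĝ_k` folds this sum onto
`2 ∑_{0<k<N/2} |ĝ_k|² + |ĝ_{N/2}|²`. As `1/k² ≥ 2/N²` for `k < N/2`, this yields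
`𝔽² ≥ ∑ g² / N ≥ (∑ |g|)² / N²` by Cauchy–Schwarz. For the alternating pair,
`μ - ν = (2θ/N) (-1)^j` has all its spectrum at `k = N/2`, so the bound is attained.
-/

open Complex ComplexConjugate Real

namespace IsPrimitiveRoot

variable {K : Type*} [Field K] {ζ : K} {N : ℕ}

theorem sum_range_zpow_pow (hζ : IsPrimitiveRoot ζ N) (a : ℤ) :
    ∑ k ∈ range N, (ζ ^ a) ^ k = if (N : ℤ) ∣ a then (N : K) else 0 := by
  split_ifs with ha
  · simp [(hζ.zpow_eq_one_iff_dvd a).2 ha]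
  · have hpow : (ζ ^ a) ^ N = 1 := by
      rw [← zpow_natCast, ← zpow_mul, hζ.zpow_eq_one_iff_dvd]
      exact dvd_mul_left _ _
    rw [geom_sum_eq (mt (hζ.zpow_eq_one_iff_dvd a).1 ha), hpow, sub_self, zero_div]

end IsPrimitiveRoot

section DFT

variable {N : ℕ}

theorem dft_eq_sum_zpow (f : Fin N → ℝ) (k : ℤ) :
    dft N f k = ∑ j : Fin N, (f j : ℂ) * exp (2 * π * I / N) ^ (-((j : ℕ) * k)) := by
  unfold dft
  congr 1 with j
  rw [← exp_int_mul]
  push_cast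
  ring_nf

theorem conj_exp_two_pi_I_div_zpow (n : ℤ) :
    conj (exp (2 * π * I / N) ^ n) = exp (2 * π * I / N) ^ (-n) := by
  rw [map_zpow₀, ← exp_conj, zpow_neg, ← inv_zpow, ← Complex.exp_neg]
  simp [map_div₀, neg_div, map_ofNat]

theorem dft_sub (μ ν : Fin N → ℝ) (k : ℤ) : dft N (μ - ν) k = dft N μ k - dft N ν k := by
  simp [dft, sub_mul]

theorem dft_const_mul (c : ℝ) (f : Fin N → ℝ) (k : ℤ) :
    dft N (fun j => c * f j) k = c * dft N f k := by
  simp [dft, mul_sum, mul_assoc]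

theorem dft_zero (f : Fin N → ℝ) : dft N f 0 = ∑ j, (f j : ℂ) := by
  simp [dft]

theorem dft_natCast_sub (hN : N ≠ 0) (f : Fin N → ℝ) (k : ℤ) :
    dft N f (N - k) = conj (dft N f k) := by
  have hω := Complex.isPrimitiveRoot_exp N hN
  simp only [dft_eq_sum_zpow, map_sum, map_mul, conj_ofReal, conj_exp_two_pi_I_div_zpow]
  congr 1 with j
  rw [show -((j : ℕ) * ((N : ℤ) - k)) = (j : ℕ) * k + N * -(j : ℕ) by ring,
    zpow_add₀ (hω.ne_zero hN), zpow_mul _ (N : ℤ), zpow_natCast, hω.pow_eq_one, one_zpow,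
    mul_one, neg_neg]

theorem norm_dft_natCast_sub (hN : N ≠ 0) (f : Fin N → ℝ) (k : ℤ) :
    ‖dft N f (N - k)‖ = ‖dft N f k‖ := by
  rw [dft_natCast_sub hN, RCLike.norm_conj]

theorem Fin.natCast_dvd_val_sub_val_iff (j l : Fin N) : (N : ℤ) ∣ (l : ℕ) - (j : ℕ) ↔ j = l := by
  rw [← Nat.modEq_iff_dvd, Fin.ext_iff]
  exact ⟨fun h => h.eq_of_lt_of_lt j.2 l.2, fun h => h ▸ rfl⟩

theorem sum_range_norm_dft_sq (hN : N ≠ 0) (f : Fin N → ℝ) :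
    ∑ k ∈ range N, ‖dft N f k‖ ^ 2 = N * ∑ j, f j ^ 2 := by
  apply Complex.ofReal_injective
  push_cast
  simp_rw [← Complex.mul_conj', dft_eq_sum_zpow, map_sum, map_mul, conj_ofReal,
    conj_exp_two_pi_I_div_zpow, sum_mul_sum]
  have hω := isPrimitiveRoot_exp N hN
  set ω := exp (2 * π * I / N)
  have hkernel : ∀ (k : ℕ) (j l : Fin N),
      (f j * ω ^ (-((j : ℕ) * (k : ℤ)))) * (f l * ω ^ (-(-((l : ℕ) * (k : ℤ))))) =
        f j * f l * (ω ^ ((l : ℕ) - (j : ℕ) : ℤ)) ^ k := by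
    intro k j l
    rw [← zpow_natCast, ← zpow_mul, neg_neg, mul_mul_mul_comm, ← zpow_add₀ (hω.ne_zero hN)]
    ring_nf
  simp_rw [hkernel]
  rw [sum_comm]
  simp_rw [sum_comm (s := range N), ← mul_sum, hω.sum_range_zpow_pow,
    Fin.natCast_dvd_val_sub_val_iff]
  simp [mul_sum, sq, mul_comm]

end DFT

section EvenLength

variable {m : ℕ}

theorem sum_range_two_mul_norm_dft_sq (hm : 0 < m) (f : Fin (2 * m) → ℝ) :
    ∑ k ∈ range (2 * m), ‖dft (2 * m) f k‖ ^ 2 = ‖dft (2 * m) f 0‖ ^ 2 +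
      2 * ∑ k ∈ Ico 1 m, ‖dft (2 * m) f k‖ ^ 2 + ‖dft (2 * m) f m‖ ^ 2 := by
  set h : ℕ → ℝ := fun k => ‖dft (2 * m) f k‖ ^ 2
  have hreflect : ∑ k ∈ Ico (m + 1) (2 * m), h k = ∑ k ∈ Ico 1 m, h k := by
    have := sum_Ico_reflect h 1 (n := 2 * m) (m := m) (by omega)
    rw [show 2 * m + 1 - m = m + 1 by omega, show 2 * m + 1 - 1 = 2 * m by omega] at this
    rw [← this]
    refine sum_congr rfl fun k hk => ?_
    have hk2m : k ≤ 2 * m := by simp only [mem_Ico] at hk; omega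
    simp only [h]
    rw [show ((2 * m - k : ℕ) : ℤ) = ((2 * m : ℕ) : ℤ) - k by omega,
      norm_dft_natCast_sub (by omega)]
  rw [range_eq_Ico, ← sum_Ico_consecutive h (Nat.zero_le (m + 1)) (by omega), hreflect,
    sum_Ico_succ_top (Nat.zero_le m), sum_eq_sum_Ico_succ_bot hm]
  simp only [h, Nat.cast_zero]
  ring

theorem F2_two_mul (μ ν : Fin (2 * m) → ℝ) :
    F2 (2 * m) μ ν = ∑ k ∈ Ico 1 m, ‖dft (2 * m) (μ - ν) k‖ ^ 2 / (k : ℝ) ^ 2 +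
      ‖dft (2 * m) (μ - ν) m‖ ^ 2 / ((2 * m : ℕ) : ℝ) ^ 2 := by
  have hIcc : Icc 1 (2 * m / 2 - 1) = Ico 1 m := by
    ext k
    simp only [mem_Icc, mem_Ico]
    omega
  have hhalf : ((2 * m : ℕ) : ℤ) / 2 = m := by omega
  simp only [F2, hIcc, hhalf, dft_sub]

theorem sum_sq_div_le_F2 (hm : 0 < m) {μ ν : Fin (2 * m) → ℝ} (hsum : ∑ j, μ j = ∑ j, ν j) :
    (∑ j, (μ j - ν j) ^ 2) / (2 * m : ℕ) ≤ F2 (2 * m) μ ν := by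
  have hzero : dft (2 * m) (μ - ν) 0 = 0 := by
    simp [dft_zero, ← Complex.ofReal_sum, sum_sub_distrib, hsum]
  have hparseval := sum_range_norm_dft_sq (by omega) (μ - ν)
  rw [sum_range_two_mul_norm_dft_sq hm, hzero, norm_zero, zero_pow two_ne_zero, zero_add]
    at hparseval
  set h : ℕ → ℝ := fun k => ‖dft (2 * m) (μ - ν) k‖ ^ 2
  have hterm : ∀ k ∈ Ico 1 m, 2 * h k / ((2 * m : ℕ) : ℝ) ^ 2 ≤ h k / (k : ℝ) ^ 2 := by
    intro k hk
    simp only [mem_Ico] at hk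
    have hk1 : (1 : ℝ) ≤ k := by exact_mod_cast hk.1
    have hk2 : (k : ℝ) ^ 2 ≤ m ^ 2 := pow_le_pow_left₀ (by positivity) (by exact_mod_cast hk.2.le) 2
    rw [div_le_div_iff₀ (by positivity) (by nlinarith)]
    push_cast
    nlinarith [mul_le_mul_of_nonneg_left hk2 (sq_nonneg ‖dft (2 * m) (μ - ν) k‖)]
  calc (∑ j, (μ j - ν j) ^ 2) / (2 * m : ℕ)
      = (2 * ∑ k ∈ Ico 1 m, h k + h m) / ((2 * m : ℕ) : ℝ) ^ 2 := by
        rw [hparseval]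
        field_simp
        simp
    _ = ∑ k ∈ Ico 1 m, 2 * h k / ((2 * m : ℕ) : ℝ) ^ 2 + h m / ((2 * m : ℕ) : ℝ) ^ 2 := by
        rw [← sum_div, ← mul_sum, add_div]
    _ ≤ F2 (2 * m) μ ν := by
        rw [F2_two_mul]
        exact add_le_add_left (sum_le_sum hterm) _

theorem two_mul_TV_div_le_FD (hm : 0 < m) {μ ν : Fin (2 * m) → ℝ}
    (hsum : ∑ j, μ j = ∑ j, ν j) : 2 * TV (2 * m) μ ν / (2 * m : ℕ) ≤ FD (2 * m) μ ν := by
  have hcs : (∑ j, |μ j - ν j|) ^ 2 ≤ (2 * m : ℕ) * ∑ j, (μ j - ν j) ^ 2 := by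
    simpa using sq_sum_le_card_mul_sum_sq (s := univ) (f := fun j => |μ j - ν j|)
  refine (le_abs_self _).trans (Real.abs_le_sqrt ?_)
  calc (2 * TV (2 * m) μ ν / (2 * m : ℕ)) ^ 2
      = (∑ j, |μ j - ν j|) ^ 2 / ((2 * m : ℕ) : ℝ) ^ 2 := by
        rw [TV, div_pow]
        ring
    _ ≤ (∑ j, (μ j - ν j) ^ 2) / (2 * m : ℕ) := by
        rw [div_le_div_iff₀ (by positivity) (by positivity)]
        nlinarith
    _ ≤ F2 (2 * m) μ ν := sum_sq_div_le_F2 hm hsum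

theorem dft_neg_one_pow (hm : m ≠ 0) (k : ℕ) :
    dft (2 * m) (fun j => (-1) ^ (j : ℕ)) k = if 2 * m ∣ k + m then ((2 * m : ℕ) : ℂ) else 0 := by
  have hω := isPrimitiveRoot_exp (2 * m) (by omega)
  set ω := exp (2 * π * I / (2 * m : ℕ))
  have hneg : ω ^ (-(m : ℤ)) = -1 := by
    rw [zpow_neg, zpow_natCast, (hω.pow (by omega) (mul_comm 2 m)).eq_neg_one_of_two_right,
      inv_neg, inv_one]
  have hterm : ∀ j : ℕ, (-1 : ℂ) ^ j * ω ^ (-((j : ℤ) * k)) = (ω ^ (-((k + m : ℕ) : ℤ))) ^ j := by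
    intro j
    rw [← hneg, ← zpow_natCast, ← zpow_mul, ← zpow_add₀ (hω.ne_zero (by omega)),
      ← zpow_natCast, ← zpow_mul]
    push_cast
    ring_nf
  rw [dft_eq_sum_zpow]
  simp only [Complex.ofReal_pow, Complex.ofReal_neg, Complex.ofReal_one]
  rw [Fin.sum_univ_eq_sum_range (fun j => (-1 : ℂ) ^ j * ω ^ (-((j : ℤ) * k))),
    sum_congr rfl fun j _ => hterm j, hω.sum_range_zpow_pow]
  simp only [Int.dvd_neg, Int.natCast_dvd_natCast]

theorem F2_eq_sq_of_sub_eq (hm : 0 < m) {μ ν : Fin (2 * m) → ℝ} (c : ℝ)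
    (h : μ - ν = fun j : Fin (2 * m) => c * (-1) ^ (j : ℕ)) : F2 (2 * m) μ ν = c ^ 2 := by
  have hoff : ∀ k ∈ Ico 1 m, ¬ 2 * m ∣ k + m := fun k hk =>
    Nat.not_dvd_of_pos_of_lt (by omega) (by simp only [mem_Ico] at hk; omega)
  rw [F2_two_mul, h]
  simp_rw [dft_const_mul, dft_neg_one_pow hm.ne']
  rw [sum_eq_zero fun k hk => by simp [hoff k hk], if_pos ⟨1, by ring⟩, norm_mul, mul_pow,
    Complex.norm_real, Complex.norm_natCast, Real.norm_eq_abs, sq_abs]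
  field_simp
  simp

end EvenLength

section Extremal

def evenMass (N : ℕ) (c d : ℝ) (i : Fin N) : ℝ :=
  (if Even (i : ℕ) then c else 0) + (if (i : ℕ) = 0 then d else 0)

def oddMass (N : ℕ) (c d : ℝ) (i : Fin N) : ℝ :=
  (if ¬ Even (i : ℕ) then c else 0) + (if (i : ℕ) = 0 then d else 0)

theorem ite_even_eq (c : ℝ) (n : ℕ) : (if Even n then c else 0) = c / 2 + c / 2 * (-1) ^ n := by
  rcases n.even_or_odd with hn | hn
  · rw [if_pos hn, hn.neg_one_pow]; ring
  · rw [if_neg (Nat.not_even_iff_odd.2 hn), hn.neg_one_pow]; ring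

theorem ite_not_even_eq (c : ℝ) (n : ℕ) :
    (if ¬ Even n then c else 0) = c / 2 - c / 2 * (-1) ^ n := by
  rw [ite_not, ← sub_eq_iff_eq_add'.2 (ite_even_eq c n)]
  split_ifs <;> ring

theorem sum_ite_val_eq_zero {N : ℕ} (hN : 0 < N) (d : ℝ) :
    ∑ i : Fin N, (if (i : ℕ) = 0 then d else 0) = d := by
  rw [Fin.sum_univ_eq_sum_range (fun i => if i = 0 then d else 0), sum_ite_eq']
  simp [hN]

variable {m : ℕ} {c d : ℝ}

theorem sum_evenMass (hm : 0 < m) : ∑ i, evenMass (2 * m) c d i = m * c + d := by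
  simp only [evenMass, sum_add_distrib, ite_even_eq, ← mul_sum, sum_const, card_univ,
    Fintype.card_fin, Fin.sum_neg_one_pow, if_pos (even_two_mul m), nsmul_eq_mul,
    sum_ite_val_eq_zero (by omega : 0 < 2 * m)]
  push_cast
  ring

theorem sum_oddMass (hm : 0 < m) : ∑ i, oddMass (2 * m) c d i = m * c + d := by
  simp only [oddMass, sum_add_distrib, ite_not_even_eq, sum_sub_distrib, ← mul_sum, sum_const,
    card_univ, Fintype.card_fin, Fin.sum_neg_one_pow, if_pos (even_two_mul m), nsmul_eq_mul,
    sum_ite_val_eq_zero (by omega : 0 < 2 * m)]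
  push_cast
  ring

theorem isProb_evenMass (hm : 0 < m) (hc : 0 ≤ c) (hd : 0 ≤ d) (h : m * c + d = 1) :
    IsProb (2 * m) (evenMass (2 * m) c d) :=
  ⟨fun i => by unfold evenMass; split_ifs <;> linarith, (sum_evenMass hm).trans h⟩

theorem isProb_oddMass (hm : 0 < m) (hc : 0 ≤ c) (hd : 0 ≤ d) (h : m * c + d = 1) :
    IsProb (2 * m) (oddMass (2 * m) c d) :=
  ⟨fun i => by unfold oddMass; split_ifs <;> linarith, (sum_oddMass hm).trans h⟩

theorem evenMass_sub_oddMass (N : ℕ) (c d : ℝ) :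
    evenMass N c d - oddMass N c d = fun i : Fin N => c * (-1) ^ (i : ℕ) := by
  ext i
  simp only [Pi.sub_apply, evenMass, oddMass, ite_even_eq, ite_not_even_eq]
  ring

theorem TV_evenMass_oddMass (N : ℕ) (c d : ℝ) :
    TV N (evenMass N c d) (oddMass N c d) = N * |c| / 2 := by
  have h := congrFun (evenMass_sub_oddMass N c d)
  simp only [Pi.sub_apply] at h
  simp only [TV, h, abs_mul, abs_pow, abs_neg, abs_one, one_pow, mul_one, sum_const, card_univ,
    Fintype.card_fin, nsmul_eq_mul]
  ring

theorem FD_evenMass_oddMass (hm : 0 < m) :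
    FD (2 * m) (evenMass (2 * m) c d) (oddMass (2 * m) c d) = |c| := by
  rw [FD, F2_eq_sq_of_sub_eq hm c (evenMass_sub_oddMass _ c d), Real.sqrt_sq_eq_abs]

end Extremal

/-- the lower tight bound is `C_L(θ) = 2θ/N`, attained at the
alternating measures `μ = (2θ/N)(1,0,1,0,…) + (1-θ)δ₀`, `ν = (2θ/N)(0,1,0,1,…) + (1-θ)δ₀`. -/
theorem lower_tight_bound (N : ℕ) (hN : 0 < N) (hNe : Even N)
    (θ : ℝ) (hθ : θ ∈ Set.Ioc (0 : ℝ) 1) :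
    (∀ μ ν : Fin N → ℝ, IsProb N μ → IsProb N ν → TV N μ ν = θ →
      2 * θ / N ≤ FD N μ ν) ∧
    (IsProb N (fun i : Fin N =>
        (if Even (i : ℕ) then 2 * θ / N else 0) + (if (i : ℕ) = 0 then 1 - θ else 0)) ∧
     IsProb N (fun i : Fin N =>
        (if ¬ Even (i : ℕ) then 2 * θ / N else 0) + (if (i : ℕ) = 0 then 1 - θ else 0)) ∧
     TV N (fun i : Fin N =>
        (if Even (i : ℕ) then 2 * θ / N else 0) + (if (i : ℕ) = 0 then 1 - θ else 0))
        (fun i : Fin N =>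
        (if ¬ Even (i : ℕ) then 2 * θ / N else 0) + (if (i : ℕ) = 0 then 1 - θ else 0)) = θ ∧
     FD N (fun i : Fin N =>
        (if Even (i : ℕ) then 2 * θ / N else 0) + (if (i : ℕ) = 0 then 1 - θ else 0))
        (fun i : Fin N =>
        (if ¬ Even (i : ℕ) then 2 * θ / N else 0) + (if (i : ℕ) = 0 then 1 - θ else 0))
       = 2 * θ / N) := by
  obtain ⟨hθ0, hθ1⟩ := hθ
  obtain ⟨m, rfl⟩ := hNe.two_dvd
  have hm : 0 < m := by omega
  have hc : 0 ≤ 2 * θ / (2 * m : ℕ) := by positivity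
  have hmass : m * (2 * θ / (2 * m : ℕ)) + (1 - θ) = 1 := by
    push_cast
    field_simp
    ring
  refine ⟨fun μ ν hμ hν hTV => ?_, isProb_evenMass hm hc (by linarith) hmass,
    isProb_oddMass hm hc (by linarith) hmass, (TV_evenMass_oddMass _ _ _).trans ?_,
    (FD_evenMass_oddMass hm).trans (abs_of_nonneg hc)⟩
  · rw [← hTV]
    exact two_mul_TV_div_le_FD hm (hμ.2.trans hν.2.symm)
  · rw [abs_of_nonneg hc]
    field_simp
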